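/- arXiv:2502.10020 — 2 statements merged into one kernel-verified Lean document; each statement's English description precedes it below -/
import Mathlib

section
/- Let λ > 0, t ∈ ℕ, 𝒲 ⊆ [t−1], and for each s ∈ [t−1]\𝒲 let S_s be a finite assortment with feature vectors x_{si} ∈ ℝ^d, and let w_{s+1}, w* ∈ ℝ^d satisfy max_{i∈S_s} |x_{si}ᵀ(w_{s+1} − w*)| ≤ 1/(3√2). Define H_t = λ I_d + Σ_{s∈[t−1]\𝒲} ∇²ℓ_s(w_{s+1}) and H_t(w*) = (λ/e) I_d + Σ_{s∈[t−1]\𝒲} ∇²ℓ_s(w*), where ∇²ℓ_s(v) denotes the Hessian of the MNL loss for assortment S_s at parameter v. Then (1/e) H_t(w*) ⪯ H_t ⪯ e H_t(w*), where A ⪯ B means B − A is positive semidefinite. -/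
open Matrix

noncomputable section

/-- MNL choice probability of item `i ∈ S`. -/
def mnlProb {d : ℕ} {ι : Type*} (S : Finset ι) (x : ι → Fin d → ℝ)
    (w : Fin d → ℝ) (i : ι) : ℝ :=
  Real.exp (x i ⬝ᵥ w) / (1 + ∑ j ∈ S, Real.exp (x j ⬝ᵥ w))

/-- Hessian of the MNL loss:
`∇²ℓ(w) = Σ_{i∈S} p(i|S,w) xᵢxᵢᵀ − (Σ_{i∈S} p(i|S,w) xᵢ)(Σ_{j∈S} p(j|S,w) xⱼ)ᵀ`. -/
def mnlHess {d : ℕ} {ι : Type*} (S : Finset ι) (x : ι → Fin d → ℝ)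
    (w : Fin d → ℝ) : Matrix (Fin d) (Fin d) ℝ :=
  (∑ i ∈ S, mnlProb S x w i • vecMulVec (x i) (x i))
    - vecMulVec (∑ i ∈ S, mnlProb S x w i • x i) (∑ i ∈ S, mnlProb S x w i • x i)

end

/-!
At `v`, the quadratic form of the MNL Hessian is the variance of `z = x ⬝ᵥ v` under the choice
distribution, the outside option carrying `z = 0`; written as `½ ∑ p_a p_b (z_a - z_b)²` over
pairs of options, it is quadratic in the probabilities. Moving every utility `x_i ⬝ᵥ w` by at
most `δ` changes each probability, the outside one included, by a factor at most `exp (2δ)`, so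
the Hessian changes by a factor at most `exp (4δ)` in the Loewner order, which is `e` for
`δ = 1/4 ≥ 1/(3√2)`. Summing over the rounds and comparing `λ I` with `(λ/e) I` gives both bounds.
-/

open Finset Real

section Variance

variable {ι : Type*} (S : Finset ι)

/-- The variance of `z` under the distribution giving mass `p i` to each `i ∈ S` and the
remaining mass `1 - ∑ i ∈ S, p i` to an outside option where `z` vanishes. -/
def varianceWithOutside (p z : ι → ℝ) : ℝ :=
  ∑ i ∈ S, p i * z i ^ 2 - (∑ i ∈ S, p i * z i) ^ 2

/-- Pairs involving the outside option contribute the first term, pairs inside `S` the second. -/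
lemma varianceWithOutside_eq (p z : ι → ℝ) :
    varianceWithOutside S p z
      = (1 - ∑ i ∈ S, p i) * ∑ i ∈ S, p i * z i ^ 2
        + (1 / 2) * ∑ i ∈ S, ∑ j ∈ S, p i * p j * (z i - z j) ^ 2 := by
  have hpairs : ∑ i ∈ S, ∑ j ∈ S, p i * p j * (z i - z j) ^ 2
      = 2 * ((∑ i ∈ S, p i) * ∑ i ∈ S, p i * z i ^ 2 - (∑ i ∈ S, p i * z i) ^ 2) := by
    have hexpand : ∀ i j, p i * p j * (z i - z j) ^ 2
        = p i * z i ^ 2 * p j - 2 * (p i * z i * (p j * z j)) + p i * (p j * z j ^ 2) := by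
      intros; ring
    simp only [hexpand, sum_add_distrib, sum_sub_distrib, ← sum_mul, ← mul_sum]
    ring
  rw [varianceWithOutside, hpairs]
  ring

lemma varianceWithOutside_le {p q : ι → ℝ} (z : ι → ℝ) {r : ℝ} (hr : 0 ≤ r)
    (hp : ∀ i ∈ S, 0 ≤ p i) (hq : ∀ i ∈ S, 0 ≤ q i) (hq_sum : ∑ i ∈ S, q i ≤ 1)
    (hpq : ∀ i ∈ S, p i ≤ r * q i)
    (hpq_out : 1 - ∑ i ∈ S, p i ≤ r * (1 - ∑ i ∈ S, q i)) :
    varianceWithOutside S p z ≤ r ^ 2 * varianceWithOutside S q z := by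
  have hp_moment : ∑ i ∈ S, p i * z i ^ 2 ≤ r * ∑ i ∈ S, q i * z i ^ 2 := by
    rw [mul_sum]
    exact sum_le_sum fun i hi => by
      rw [← mul_assoc]; exact mul_le_mul_of_nonneg_right (hpq i hi) (sq_nonneg _)
  have hout : (1 - ∑ i ∈ S, p i) * ∑ i ∈ S, p i * z i ^ 2
      ≤ r ^ 2 * ((1 - ∑ i ∈ S, q i) * ∑ i ∈ S, q i * z i ^ 2) :=
    calc (1 - ∑ i ∈ S, p i) * ∑ i ∈ S, p i * z i ^ 2
        ≤ (r * (1 - ∑ i ∈ S, q i)) * (r * ∑ i ∈ S, q i * z i ^ 2) :=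
          mul_le_mul hpq_out hp_moment
            (sum_nonneg fun i hi => mul_nonneg (hp i hi) (sq_nonneg _))
            (mul_nonneg hr (by linarith))
      _ = r ^ 2 * ((1 - ∑ i ∈ S, q i) * ∑ i ∈ S, q i * z i ^ 2) := by ring
  have hin : ∑ i ∈ S, ∑ j ∈ S, p i * p j * (z i - z j) ^ 2
      ≤ r ^ 2 * ∑ i ∈ S, ∑ j ∈ S, q i * q j * (z i - z j) ^ 2 := by
    simp only [mul_sum]
    refine sum_le_sum fun i hi => sum_le_sum fun j hj => ?_
    have hpp : p i * p j ≤ r * q i * (r * q j) :=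
      mul_le_mul (hpq i hi) (hpq j hj) (hp j hj) (mul_nonneg hr (hq i hi))
    calc p i * p j * (z i - z j) ^ 2 ≤ r * q i * (r * q j) * (z i - z j) ^ 2 :=
          mul_le_mul_of_nonneg_right hpp (sq_nonneg _)
      _ = r ^ 2 * (q i * q j * (z i - z j) ^ 2) := by ring
  rw [varianceWithOutside_eq, varianceWithOutside_eq]
  linarith

end Variance

section MNL

variable {d : ℕ} {ι : Type*} (S : Finset ι) (x : ι → Fin d → ℝ)

noncomputable def mnlPartition (w : Fin d → ℝ) : ℝ :=
  1 + ∑ j ∈ S, exp (x j ⬝ᵥ w)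

lemma mnlPartition_pos (w : Fin d → ℝ) : 0 < mnlPartition S x w := by
  unfold mnlPartition; positivity

lemma mnlProb_eq_div (w : Fin d → ℝ) (i : ι) :
    mnlProb S x w i = exp (x i ⬝ᵥ w) / mnlPartition S x w :=
  rfl

lemma mnlProb_nonneg (w : Fin d → ℝ) (i : ι) : 0 ≤ mnlProb S x w i :=
  div_nonneg (exp_nonneg _) (mnlPartition_pos S x w).le

lemma one_sub_sum_mnlProb (w : Fin d → ℝ) :
    1 - ∑ i ∈ S, mnlProb S x w i = (mnlPartition S x w)⁻¹ := by
  have hZ := (mnlPartition_pos S x w).ne'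
  simp only [mnlProb_eq_div, ← sum_div]
  field_simp
  simp [mnlPartition]

lemma sum_mnlProb_le_one (w : Fin d → ℝ) : ∑ i ∈ S, mnlProb S x w i ≤ 1 := by
  have := one_sub_sum_mnlProb S x w
  have := inv_pos.2 (mnlPartition_pos S x w)
  linarith

lemma mnlPartition_le_exp_mul {w w' : Fin d → ℝ} {δ : ℝ} (hδ : 0 ≤ δ)
    (h : ∀ i ∈ S, x i ⬝ᵥ w ≤ x i ⬝ᵥ w' + δ) :
    mnlPartition S x w ≤ exp δ * mnlPartition S x w' := by
  rw [mnlPartition, mnlPartition, mul_add, mul_one, mul_sum]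
  gcongr with i hi
  · exact one_le_exp hδ
  · rw [← exp_add, add_comm δ]
    exact exp_le_exp.2 (h i hi)

variable {S x}

lemma mnlProb_le_exp_mul {w w' : Fin d → ℝ} {δ : ℝ} (hδ : 0 ≤ δ)
    (h : ∀ i ∈ S, |x i ⬝ᵥ w - x i ⬝ᵥ w'| ≤ δ) {i : ι} (hi : i ∈ S) :
    mnlProb S x w i ≤ exp (2 * δ) * mnlProb S x w' i := by
  have hZ := mnlPartition_le_exp_mul S x (w := w') (w' := w) hδ fun j hj => by
    linarith [(abs_le.1 (h j hj)).1]
  have hnum : exp (x i ⬝ᵥ w) ≤ exp δ * exp (x i ⬝ᵥ w') := by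
    rw [← exp_add]
    exact exp_le_exp.2 (by linarith [(abs_le.1 (h i hi)).2])
  have hZw := mnlPartition_pos S x w
  have hZw' := mnlPartition_pos S x w'
  rw [mnlProb_eq_div, mnlProb_eq_div, two_mul, exp_add, div_le_iff₀ hZw]
  calc exp (x i ⬝ᵥ w) ≤ exp δ * exp (x i ⬝ᵥ w') := hnum
    _ = exp δ * (exp (x i ⬝ᵥ w') / mnlPartition S x w') * mnlPartition S x w' := by
        field_simp
    _ ≤ exp δ * (exp (x i ⬝ᵥ w') / mnlPartition S x w') * (exp δ * mnlPartition S x w) := by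
        gcongr
    _ = _ := by ring

lemma one_sub_sum_mnlProb_le_exp_mul {w w' : Fin d → ℝ} {δ : ℝ} (hδ : 0 ≤ δ)
    (h : ∀ i ∈ S, |x i ⬝ᵥ w - x i ⬝ᵥ w'| ≤ δ) :
    1 - ∑ i ∈ S, mnlProb S x w i ≤ exp (2 * δ) * (1 - ∑ i ∈ S, mnlProb S x w' i) := by
  have hZ := mnlPartition_le_exp_mul S x (w := w') (w' := w) hδ fun j hj => by
    linarith [(abs_le.1 (h j hj)).1]
  have hZw' := mnlPartition_pos S x w'
  rw [one_sub_sum_mnlProb, one_sub_sum_mnlProb]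
  calc (mnlPartition S x w)⁻¹ = exp δ * (exp δ * mnlPartition S x w)⁻¹ := by
        rw [mul_inv, ← mul_assoc, mul_inv_cancel₀ (exp_pos δ).ne', one_mul]
    _ ≤ exp δ * (mnlPartition S x w')⁻¹ := by gcongr
    _ ≤ exp (2 * δ) * (mnlPartition S x w')⁻¹ := by gcongr; linarith

variable (S x)

lemma dotProduct_mnlHess_mulVec (w v : Fin d → ℝ) :
    v ⬝ᵥ mnlHess S x w *ᵥ v = varianceWithOutside S (mnlProb S x w) (fun i => x i ⬝ᵥ v) := by
  have hrank_one : ∀ a : Fin d → ℝ, v ⬝ᵥ vecMulVec a a *ᵥ v = (a ⬝ᵥ v) ^ 2 := fun a => by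
    rw [vecMulVec_mulVec, op_smul_eq_smul, dotProduct_smul, smul_eq_mul, dotProduct_comm, sq]
  simp only [mnlHess, varianceWithOutside, sub_mulVec, dotProduct_sub, hrank_one, sum_mulVec,
    dotProduct_sum, smul_mulVec, dotProduct_smul, sum_dotProduct, smul_dotProduct, smul_eq_mul]

lemma isHermitian_mnlHess (w : Fin d → ℝ) : (mnlHess S x w).IsHermitian := by
  have hrank_one : ∀ a : Fin d → ℝ, (vecMulVec a a).IsHermitian := fun a => by
    rw [isHermitian_iff_isSymm]; exact transpose_vecMulVec a a
  exact (isSelfAdjoint_sum S fun i _ =>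
    (hrank_one (x i)).smul (IsSelfAdjoint.all (mnlProb S x w i))).sub (hrank_one _)

variable {S x}

lemma posSemidef_exp_smul_mnlHess_sub {w w' : Fin d → ℝ} {δ : ℝ} (hδ : 0 ≤ δ)
    (h : ∀ i ∈ S, |x i ⬝ᵥ w - x i ⬝ᵥ w'| ≤ δ) :
    (exp (4 * δ) • mnlHess S x w' - mnlHess S x w).PosSemidef := by
  refine .of_dotProduct_mulVec_nonneg (((isHermitian_mnlHess S x w').smul
    (IsSelfAdjoint.all (exp (4 * δ)))).sub (isHermitian_mnlHess S x w)) fun v => ?_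
  have hvar := varianceWithOutside_le S (fun i => x i ⬝ᵥ v) (exp_nonneg (2 * δ))
    (fun i _ => mnlProb_nonneg S x w i) (fun i _ => mnlProb_nonneg S x w' i)
    (sum_mnlProb_le_one S x w') (fun i hi => mnlProb_le_exp_mul hδ h hi)
    (one_sub_sum_mnlProb_le_exp_mul hδ h)
  rw [← exp_nat_mul, ← mul_assoc, show ((2 : ℕ) : ℝ) * 2 = 4 by norm_num] at hvar
  rw [star_trivial, sub_mulVec, dotProduct_sub, smul_mulVec, dotProduct_smul, smul_eq_mul,
    dotProduct_mnlHess_mulVec, dotProduct_mnlHess_mulVec, sub_nonneg]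
  exact hvar

end MNL

lemma one_div_three_mul_sqrt_two_le : 1 / (3 * √2) ≤ 1 / 4 := by
  have : (4 : ℝ) / 3 ≤ √2 := le_sqrt_of_sq_le (by norm_num)
  exact one_div_le_one_div_of_le (by norm_num) (by linarith)

theorem mnl_hessian_matrix_comparison_general {d : ℕ} {ι : Type*} (lam : ℝ)
    (hlam : 0 < lam) (t : ℕ) (Wset : Finset ℕ)
    (S : ℕ → Finset ι) (x : ℕ → ι → Fin d → ℝ)
    (wseq : ℕ → Fin d → ℝ) (wstar : Fin d → ℝ)
    (halign : ∀ s ∈ Finset.Icc 1 (t - 1), s ∉ Wset →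
      ∀ i ∈ S s, |x s i ⬝ᵥ (wseq (s + 1) - wstar)| ≤ 1 / (3 * Real.sqrt 2))
    (Ht Hstar : Matrix (Fin d) (Fin d) ℝ)
    (hHt : Ht = lam • (1 : Matrix (Fin d) (Fin d) ℝ)
      + ∑ s ∈ (Finset.Icc 1 (t - 1)).filter (fun s => s ∉ Wset),
          mnlHess (S s) (x s) (wseq (s + 1)))
    (hHstar : Hstar = (lam / Real.exp 1) • (1 : Matrix (Fin d) (Fin d) ℝ)
      + ∑ s ∈ (Finset.Icc 1 (t - 1)).filter (fun s => s ∉ Wset),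
          mnlHess (S s) (x s) wstar) :
    (Ht - (Real.exp 1)⁻¹ • Hstar).PosSemidef ∧
    (Real.exp 1 • Hstar - Ht).PosSemidef := by
  set F := (Finset.Icc 1 (t - 1)).filter (fun s => s ∉ Wset)
  have hclose : ∀ s ∈ F, ∀ i ∈ S s, |x s i ⬝ᵥ wseq (s + 1) - x s i ⬝ᵥ wstar| ≤ 1 / 4 :=
    fun s hs i hi => by
      rw [← dotProduct_sub]
      exact (halign s (mem_filter.1 hs).1 (mem_filter.1 hs).2 i hi).trans
        one_div_three_mul_sqrt_two_le
  have hexp : exp (4 * (1 / 4 : ℝ)) = exp 1 := by norm_num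
  have hup : ∀ s ∈ F,
      (exp 1 • mnlHess (S s) (x s) wstar - mnlHess (S s) (x s) (wseq (s + 1))).PosSemidef :=
    fun s hs => hexp ▸ posSemidef_exp_smul_mnlHess_sub (by norm_num) (hclose s hs)
  have hdown : ∀ s ∈ F,
      (exp 1 • mnlHess (S s) (x s) (wseq (s + 1)) - mnlHess (S s) (x s) wstar).PosSemidef :=
    fun s hs => hexp ▸ posSemidef_exp_smul_mnlHess_sub (by norm_num)
      fun i hi => abs_sub_comm (x s i ⬝ᵥ wstar) _ ▸ hclose s hs i hi
  have he : 1 ≤ exp 1 := one_le_exp zero_le_one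
  have hlam_coeff : 0 ≤ lam - (exp 1)⁻¹ * (lam / exp 1) :=
    sub_nonneg.2 ((mul_le_of_le_one_left (by positivity) (inv_le_one_of_one_le₀ he)).trans
      (div_le_self hlam.le he))
  constructor
  · have hdecomp : Ht - (exp 1)⁻¹ • Hstar = (lam - (exp 1)⁻¹ * (lam / exp 1)) • 1
        + (exp 1)⁻¹ • ∑ s ∈ F, (exp 1 • mnlHess (S s) (x s) (wseq (s + 1))
          - mnlHess (S s) (x s) wstar) := by
      rw [hHt, hHstar, sum_sub_distrib, ← smul_sum, smul_sub, smul_smul,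
        inv_mul_cancel₀ (exp_pos 1).ne', one_smul]
      module
    rw [hdecomp]
    exact (PosSemidef.one.smul hlam_coeff).add
      ((posSemidef_sum F hdown).smul (inv_nonneg.2 (exp_pos 1).le))
  · have hdecomp : exp 1 • Hstar - Ht = ∑ s ∈ F, (exp 1 • mnlHess (S s) (x s) wstar
        - mnlHess (S s) (x s) (wseq (s + 1))) := by
      rw [hHt, hHstar, sum_sub_distrib, ← smul_sum, smul_add, smul_smul,
        mul_div_cancel₀ lam (exp_pos 1).ne']
      abel
    rw [hdecomp]
    exact posSemidef_sum F hup

/-- **Lemma D.6.** If for all `s ∈ [t−1]\𝒲` and `i ∈ S_s` we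
have `|x_{si}ᵀ(w_{s+1} − w*)| ≤ 1/(3√2)`, then with
`H_t = λ I + Σ_{s∈[t−1]\𝒲} ∇²ℓ_s(w_{s+1})` and
`H_t(w*) = (λ/e) I + Σ_{s∈[t−1]\𝒲} ∇²ℓ_s(w*)` we have
`(1/e) H_t(w*) ⪯ H_t ⪯ e H_t(w*)` (where `A ⪯ B` means `B − A` is PSD). -/
theorem mnl_hessian_matrix_comparison {d : ℕ} {ι : Type*} (lam : ℝ)
    (hlam : 0 < lam) (t : ℕ) (Wset : Finset ℕ) (hWset : Wset ⊆ Finset.Icc 1 (t - 1))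
    (S : ℕ → Finset ι) (x : ℕ → ι → Fin d → ℝ)
    (wseq : ℕ → Fin d → ℝ) (wstar : Fin d → ℝ)
    (halign : ∀ s ∈ Finset.Icc 1 (t - 1), s ∉ Wset →
      ∀ i ∈ S s, |x s i ⬝ᵥ (wseq (s + 1) - wstar)| ≤ 1 / (3 * Real.sqrt 2))
    (Ht Hstar : Matrix (Fin d) (Fin d) ℝ)
    (hHt : Ht = lam • (1 : Matrix (Fin d) (Fin d) ℝ)
      + ∑ s ∈ (Finset.Icc 1 (t - 1)).filter (fun s => s ∉ Wset),
          mnlHess (S s) (x s) (wseq (s + 1)))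
    (hHstar : Hstar = (lam / Real.exp 1) • (1 : Matrix (Fin d) (Fin d) ℝ)
      + ∑ s ∈ (Finset.Icc 1 (t - 1)).filter (fun s => s ∉ Wset),
          mnlHess (S s) (x s) wstar) :
    (Ht - (Real.exp 1)⁻¹ • Hstar).PosSemidef ∧
    (Real.exp 1 • Hstar - Ht).PosSemidef :=
  mnl_hessian_matrix_comparison_general lam hlam t Wset S x wseq wstar halign Ht Hstar hHt hHstar
end

section
/- Let K ≥ 1 and for z ∈ ℝ^K define the softmax probabilities p_i(z) = exp(z_i)/(1 + Σ_{k=1}^K exp(z_k)) for i ∈ [K]. Then for any z, z' ∈ ℝ^K and any nonnegative weights ω₁, …, ω_K ≥ 0: Σ_{i=1}^K ω_i |p_i(z) − p_i(z')| ≤ 2 (max_{1≤i≤K} ω_i) · ‖z − z'‖_∞. -/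
/-- Softmax probabilities: `pᵢ(z) = exp(zᵢ)/(1 + Σₖ exp(zₖ))`. -/
noncomputable def softmaxP (K : ℕ) (z : Fin K → ℝ) (i : Fin K) : ℝ :=
  Real.exp (z i) / (1 + ∑ k, Real.exp (z k))

/-!
Choosing signs `cᵢ = ωᵢ · sign (pᵢ(z) − pᵢ(z'))` turns the left-hand side into `g 1 − g 0` for
the linear functional `g t = Σᵢ cᵢ pᵢ(z' + t (z − z'))`. With `r = z − z'` and `p = p(z' + t r)`,
`g' t = Σᵢ cᵢ pᵢ (rᵢ − Σₖ pₖ rₖ)`; since `p` is a sub-probability vector, both `|rᵢ|` and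
`|Σₖ pₖ rₖ|` are at most `‖r‖_∞`, so `|g'| ≤ 2 (maxᵢ ωᵢ) ‖r‖_∞` and the mean value inequality
concludes.
-/

open Finset

section SubProbability

variable {ι : Type*} [Fintype ι] {p : ι → ℝ}

lemma abs_sum_mul_le_norm (hp : ∀ i, 0 ≤ p i) (hp1 : ∑ i, p i ≤ 1) (r : ι → ℝ) :
    |∑ i, p i * r i| ≤ ‖r‖ :=
  calc |∑ i, p i * r i| ≤ ∑ i, p i * ‖r‖ := by
        refine (abs_sum_le_sum_abs _ _).trans (sum_le_sum fun i _ ↦ ?_)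
        rw [abs_mul, abs_of_nonneg (hp i)]
        exact mul_le_mul_of_nonneg_left (norm_le_pi_norm r i) (hp i)
    _ = (∑ i, p i) * ‖r‖ := (sum_mul ..).symm
    _ ≤ ‖r‖ := mul_le_of_le_one_left (norm_nonneg r) hp1

lemma abs_sum_mul_mul_sub_le {c : ι → ℝ} {W : ℝ} (hp : ∀ i, 0 ≤ p i) (hp1 : ∑ i, p i ≤ 1)
    (hW : 0 ≤ W) (hc : ∀ i, |c i| ≤ W) (r : ι → ℝ) :
    |∑ i, c i * (p i * (r i - ∑ k, p k * r k))| ≤ 2 * W * ‖r‖ := by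
  have hdev : ∀ i, |r i - ∑ k, p k * r k| ≤ 2 * ‖r‖ := fun i ↦ by
    rw [two_mul]
    exact (abs_sub _ _).trans
      (add_le_add (norm_le_pi_norm r i) (abs_sum_mul_le_norm hp hp1 r))
  calc |∑ i, c i * (p i * (r i - ∑ k, p k * r k))|
      ≤ ∑ i, p i * (2 * W * ‖r‖) := by
        refine (abs_sum_le_sum_abs _ _).trans (sum_le_sum fun i _ ↦ ?_)
        rw [abs_mul, abs_mul, abs_of_nonneg (hp i)]
        calc |c i| * (p i * |r i - ∑ k, p k * r k|) ≤ W * (p i * (2 * ‖r‖)) :=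
              mul_le_mul (hc i) (mul_le_mul_of_nonneg_left (hdev i) (hp i))
                (mul_nonneg (hp i) (abs_nonneg _)) hW
          _ = p i * (2 * W * ‖r‖) := by ring
    _ = (∑ i, p i) * (2 * W * ‖r‖) := (sum_mul ..).symm
    _ ≤ 2 * W * ‖r‖ := mul_le_of_le_one_left (by positivity) hp1

end SubProbability

section Softmax

variable {K : ℕ}

lemma one_add_sum_exp_pos (z : Fin K → ℝ) : 0 < 1 + ∑ k, Real.exp (z k) := by
  positivity

lemma softmaxP_nonneg (z : Fin K → ℝ) (i : Fin K) : 0 ≤ softmaxP K z i := by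
  unfold softmaxP
  positivity

lemma sum_softmaxP_le_one (z : Fin K → ℝ) : ∑ i, softmaxP K z i ≤ 1 := by
  simp only [softmaxP, ← sum_div]
  rw [div_le_one (one_add_sum_exp_pos z)]
  linarith

lemma HasDerivAt.softmaxP {γ : ℝ → Fin K → ℝ} {γ' : Fin K → ℝ} {t : ℝ}
    (hγ : HasDerivAt γ γ' t) (i : Fin K) :
    HasDerivAt (fun t ↦ softmaxP K (γ t) i)
      (softmaxP K (γ t) i * (γ' i - ∑ k, softmaxP K (γ t) k * γ' k)) t := by
  have hexp : ∀ k, HasDerivAt (fun t ↦ Real.exp (γ t k)) (Real.exp (γ t k) * γ' k) t :=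
    fun k ↦ (hasDerivAt_pi.1 hγ k).exp
  have hS := (HasDerivAt.fun_sum (u := univ) fun k _ ↦ hexp k).const_add 1
  refine ((hexp i).fun_div hS (one_add_sum_exp_pos (γ t)).ne').congr_deriv ?_
  simp only [_root_.softmaxP, div_mul_eq_mul_div, ← sum_div]
  field_simp

end Softmax

theorem softmax_weighted_tv_lipschitz_general (K : ℕ) (z z' : Fin K → ℝ)
    (ω : Fin K → ℝ) (hω : ∀ i, 0 ≤ ω i) :
    ∑ i, ω i * |softmaxP K z i - softmaxP K z' i| ≤ 2 * (⨆ i, ω i) * ‖z - z'‖ := by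
  set c : Fin K → ℝ := fun i ↦ ω i * SignType.sign (softmaxP K z i - softmaxP K z' i)
  have hc : ∀ i, |c i| ≤ ⨆ i, ω i := fun i ↦ by
    have hsign : |(SignType.sign (softmaxP K z i - softmaxP K z' i) : ℝ)| ≤ 1 := by
      rcases SignType.sign (softmaxP K z i - softmaxP K z' i) with _ | _ | _ <;> simp
    rw [abs_mul, abs_of_nonneg (hω i)]
    exact (mul_le_of_le_one_right (hω i) hsign).trans
      (le_ciSup (Set.finite_range ω).bddAbove i)
  have hγ : ∀ t : ℝ, HasDerivAt (fun t : ℝ ↦ z' + t • (z - z')) (z - z') t := fun t ↦ by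
    simpa using ((hasDerivAt_id t).smul_const (z - z')).const_add z'
  have hmvt := norm_image_sub_le_of_norm_deriv_le_segment_01'
    (f := fun t ↦ ∑ i, c i * softmaxP K (z' + t • (z - z')) i)
    (fun t _ ↦ (HasDerivAt.fun_sum fun i _ ↦ ((hγ t).softmaxP i).const_mul (c i)).hasDerivWithinAt)
    (fun t _ ↦ abs_sum_mul_mul_sub_le (softmaxP_nonneg _) (sum_softmaxP_le_one _)
      (Real.iSup_nonneg hω) hc (z - z'))
  have hlhs : ∑ i, ω i * |softmaxP K z i - softmaxP K z' i|
      = ∑ i, c i * softmaxP K z i - ∑ i, c i * softmaxP K z' i := by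
    rw [← sum_sub_distrib]
    refine sum_congr rfl fun i _ ↦ ?_
    rw [← self_mul_sign]
    simp only [c]
    ring
  simpa [hlhs] using (le_abs_self _).trans hmvt

/-- **core of Lemma F.2.** Weighted total-variation Lipschitz
bound for the softmax probabilities with respect to the `ℓ∞`-norm of the
utilities: for nonnegative weights `ωᵢ`,
`Σᵢ ωᵢ |pᵢ(z) − pᵢ(z')| ≤ 2 (maxᵢ ωᵢ) ‖z − z'‖_∞`.
(The norm on `Fin K → ℝ` is the sup-norm.) -/
theorem softmax_weighted_tv_lipschitz (K : ℕ) (hK : 1 ≤ K) (z z' : Fin K → ℝ)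
    (ω : Fin K → ℝ) (hω : ∀ i, 0 ≤ ω i) :
    ∑ i, ω i * |softmaxP K z i - softmaxP K z' i| ≤ 2 * (⨆ i, ω i) * ‖z - z'‖ :=
  softmax_weighted_tv_lipschitz_general K z z' ω hω
end
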